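/- arXiv:1903.07050 — 3 statements merged into one kernel-verified Lean document; each statement's English description precedes it below -/
import Mathlib

section
/- Let d ≥ 1, η ∈ (1/2, 1], C ≥ 0, and let (γ_n)_{n≥1} be nonnegative reals with γ_n = o(n^{-η}). Let (x_n)_{n≥1} be a sequence of ℝ^d-valued random variables with ‖x_{n+1} − x_n‖ ≤ C γ_n almost surely for all n, and let (τ_n)_{n≥1} be nonnegative integer-valued random variables with τ_n ≤ n for all n and sup_{n≥1} E[τ_n²] < ∞. Then almost surely ‖x_n − x_{n−τ_n}‖ → 0 as n → ∞. -/
/-!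
Fix `1/2 < α < min η 1`. By Chebyshev's inequality `P(τ_n > n^α) ≤ B n^{-2α}`, which is summable,
so by Borel–Cantelli almost surely `τ_n ≤ n^α` for all large `n`. Along such a path the window
`[n - τ_n, n)` lies in `[n/2, n)`, where the increments are `o(n^{-η})`; summing at most `n^α`
of them gives `o(n^{α-η}) = o(1)`.
-/

open Filter MeasureTheory Asymptotics Topology
open scoped ENNReal

theorem norm_sub_le_of_forall_mem_Ico {E : Type*} [SeminormedAddCommGroup E] {y : ℕ → E}
    {m n : ℕ} {c : ℝ} (hmn : m ≤ n) (h : ∀ k ∈ Finset.Ico m n, ‖y (k + 1) - y k‖ ≤ c) :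
    ‖y n - y m‖ ≤ (n - m : ℕ) * c :=
  calc ‖y n - y m‖ = dist (y m) (y n) := by rw [dist_comm, dist_eq_norm]
    _ ≤ ∑ k ∈ Finset.Ico m n, dist (y k) (y (k + 1)) := dist_le_Ico_sum_dist y hmn
    _ ≤ (Finset.Ico m n).card • c :=
      Finset.sum_le_card_nsmul _ _ _ fun k hk => by rw [dist_comm, dist_eq_norm]; exact h k hk
    _ = (n - m : ℕ) * c := by rw [Nat.card_Ico, nsmul_eq_mul]

theorem eventually_natCast_rpow_le_half {α : ℝ} (hα : α < 1) :
    ∀ᶠ n : ℕ in atTop, (n : ℝ) ^ α ≤ n / 2 := by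
  have hgrowth : Tendsto (fun n : ℕ => (n : ℝ) ^ (1 - α)) atTop atTop :=
    (tendsto_rpow_atTop (sub_pos.2 hα)).comp tendsto_natCast_atTop_atTop
  filter_upwards [hgrowth.eventually_ge_atTop 2, eventually_gt_atTop 0] with n h2 hn
  have hn' : (0 : ℝ) < n := Nat.cast_pos.2 hn
  have hsplit : (n : ℝ) ^ α * (n : ℝ) ^ (1 - α) = n := by
    rw [← Real.rpow_add hn', add_sub_cancel, Real.rpow_one]
  nlinarith [Real.rpow_pos_of_pos hn' α]

theorem isLittleO_rpow_neg_of_tendsto_rpow_mul {f : ℕ → ℝ} {η : ℝ}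
    (h : Tendsto (fun n : ℕ => (n : ℝ) ^ η * f n) atTop (𝓝 0)) :
    f =o[atTop] fun n : ℕ => (n : ℝ) ^ (-η) := by
  refine (isLittleO_iff_tendsto' ?_).2 (h.congr' ?_)
  · filter_upwards [eventually_gt_atTop 0] with n hn h0
    exact absurd h0 (Real.rpow_pos_of_pos (Nat.cast_pos.2 hn) _).ne'
  · filter_upwards with n
    rw [Real.rpow_neg (Nat.cast_nonneg n), div_inv_eq_mul, mul_comm]

theorem tendsto_norm_sub_delayed_of_isLittleO {E : Type*} [SeminormedAddCommGroup E] {y : ℕ → E}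
    {η α : ℝ} (hη : 0 ≤ η) (hαη : α ≤ η) (hα : α < 1)
    (hy : (fun k => y (k + 1) - y k) =o[atTop] fun k : ℕ => (k : ℝ) ^ (-η))
    {T : ℕ → ℕ} (hT : ∀ᶠ n in atTop, (T n : ℝ) ≤ (n : ℝ) ^ α) :
    Tendsto (fun n => ‖y n - y (n - T n)‖) atTop (𝓝 0) := by
  refine (isLittleO_one_iff ℝ).1 (isLittleO_iff.2 fun c hc => ?_)
  obtain ⟨N, hN⟩ :=
    eventually_atTop.1 (isLittleO_iff.1 hy (div_pos hc (Real.rpow_pos_of_pos two_pos η)))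
  filter_upwards [hT, eventually_natCast_rpow_le_half hα, eventually_ge_atTop (2 * N),
    eventually_gt_atTop 0] with n hTn hhalf hnN hn
  have hn' : (0 : ℝ) < n := Nat.cast_pos.2 hn
  have hT2 : 2 * T n ≤ n := by exact_mod_cast (by linarith : (2 * T n : ℝ) ≤ n)
  have hstep : ∀ k ∈ Finset.Ico (n - T n) n, ‖y (k + 1) - y k‖ ≤ c * (n : ℝ) ^ (-η) := by
    intro k hk
    have hnk : n ≤ 2 * k := by have := (Finset.mem_Ico.1 hk).1; omega
    have hnk' : (n : ℝ) / 2 ≤ k := by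
      have : (n : ℝ) ≤ 2 * k := by exact_mod_cast hnk
      linarith
    calc ‖y (k + 1) - y k‖ ≤ c / 2 ^ η * ‖(k : ℝ) ^ (-η)‖ := hN k (by omega)
      _ = c / 2 ^ η * (k : ℝ) ^ (-η) := by rw [Real.norm_of_nonneg (by positivity)]
      _ ≤ c / 2 ^ η * ((n : ℝ) / 2) ^ (-η) := mul_le_mul_of_nonneg_left
        (Real.rpow_le_rpow_of_nonpos (by positivity) hnk' (neg_nonpos.2 hη)) (by positivity)
      _ = c * (n : ℝ) ^ (-η) := by
        rw [Real.div_rpow hn'.le zero_le_two, Real.rpow_neg zero_le_two]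
        field_simp
  calc ‖‖y n - y (n - T n)‖‖ = ‖y n - y (n - T n)‖ := norm_norm _
    _ ≤ (n - (n - T n) : ℕ) * (c * (n : ℝ) ^ (-η)) :=
      norm_sub_le_of_forall_mem_Ico (Nat.sub_le _ _) hstep
    _ = T n * (c * (n : ℝ) ^ (-η)) := by rw [Nat.sub_sub_self (by omega)]
    _ ≤ (n : ℝ) ^ α * (c * (n : ℝ) ^ (-η)) := by gcongr
    _ = c * (n : ℝ) ^ (α - η) := by rw [sub_eq_add_neg, Real.rpow_add hn']; ring
    _ ≤ c * ‖(1 : ℝ)‖ := by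
      rw [norm_one, mul_one]
      exact mul_le_of_le_one_right hc.le
        (Real.rpow_le_one_of_one_le_of_nonpos (by exact_mod_cast hn) (by linarith))

section

variable {Ω : Type*} [MeasurableSpace Ω] {μ : Measure Ω}

theorem measure_lt_natCast_le_of_lintegral_sq_le {X : Ω → ℕ} (hX : AEMeasurable X μ)
    {B : ℝ≥0∞} (hB : ∫⁻ ω, (X ω : ℝ≥0∞) ^ 2 ∂μ ≤ B) {t : ℝ} (ht : 0 < t) :
    μ {ω | t < X ω} ≤ B * ENNReal.ofReal (t ^ 2)⁻¹ := by
  have hX2 : AEMeasurable (fun ω => (X ω : ℝ≥0∞) ^ 2) μ :=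
    (measurable_from_top.comp_aemeasurable hX).pow_const 2
  have hsub : {ω | t < X ω} ⊆ {ω | ENNReal.ofReal (t ^ 2) ≤ (X ω : ℝ≥0∞) ^ 2} := by
    intro ω hω
    rw [Set.mem_ofPred_eq, ← ENNReal.ofReal_natCast, ← ENNReal.ofReal_pow (Nat.cast_nonneg _)]
    exact ENNReal.ofReal_le_ofReal (pow_le_pow_left₀ ht.le (le_of_lt hω) 2)
  calc μ {ω | t < X ω} ≤ (∫⁻ ω, (X ω : ℝ≥0∞) ^ 2 ∂μ) / ENNReal.ofReal (t ^ 2) :=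
        (measure_mono hsub).trans <|
          meas_ge_le_lintegral_div hX2 (ENNReal.ofReal_pos.2 (by positivity)).ne'
            ENNReal.ofReal_ne_top
    _ ≤ B * ENNReal.ofReal (t ^ 2)⁻¹ := by
      rw [ENNReal.ofReal_inv_of_pos (by positivity), ← div_eq_mul_inv]
      gcongr

theorem ae_eventually_le_rpow_of_lintegral_sq_le {τ : ℕ → Ω → ℕ}
    (hτ : ∀ n, AEMeasurable (τ n) μ) {B : ℝ≥0∞} (hB : B ≠ ∞) {α : ℝ} (hα : 1 / 2 < α)
    (hmom : ∀ n, 1 ≤ n → ∫⁻ ω, (τ n ω : ℝ≥0∞) ^ 2 ∂μ ≤ B) :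
    ∀ᵐ ω ∂μ, ∀ᶠ n in atTop, (τ n ω : ℝ) ≤ (n : ℝ) ^ α := by
  set s : ℕ → Set Ω := fun n => {ω | 1 ≤ n ∧ (n : ℝ) ^ α < τ n ω}
  have hs : ∀ n, μ (s n) ≤ B * ENNReal.ofReal (((n : ℝ) ^ α) ^ 2)⁻¹ := by
    intro n
    rcases Nat.eq_zero_or_pos n with rfl | hn
    · simp [s]
    · refine (measure_mono fun ω hω => hω.2).trans ?_
      exact measure_lt_natCast_le_of_lintegral_sq_le (hτ n) (hmom n hn)
        (Real.rpow_pos_of_pos (Nat.cast_pos.2 hn) α)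
  have hsummable : Summable fun n : ℕ => (((n : ℝ) ^ α) ^ 2)⁻¹ := by
    refine (Real.summable_nat_rpow_inv.2 (by linarith : 1 < α * 2)).congr fun n => ?_
    rw [Real.rpow_mul (Nat.cast_nonneg n), Real.rpow_two]
  have htsum : ∑' n, μ (s n) ≠ ∞ := by
    refine ne_top_of_le_ne_top ?_ (ENNReal.tsum_le_tsum hs)
    rw [ENNReal.tsum_mul_left, ← ENNReal.ofReal_tsum_of_nonneg (fun n => by positivity) hsummable]
    exact ENNReal.mul_ne_top hB ENNReal.ofReal_ne_top
  filter_upwards [ae_eventually_notMem htsum] with ω hω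
  filter_upwards [hω, eventually_ge_atTop 1] with n hn hn1
  simpa [s, hn1] using hn

end

theorem dspg_delay_error_vanishes_general
    {Ω : Type*} [MeasurableSpace Ω] (μ : Measure Ω)
    (d : ℕ) (η : ℝ) (hη₁ : 1 / 2 < η)
    (C : ℝ)
    (γ : ℕ → ℝ)
    (hγo : Tendsto (fun n : ℕ => (n : ℝ) ^ η * γ n) atTop (nhds 0))
    (x : ℕ → Ω → EuclideanSpace ℝ (Fin d))
    (hx : ∀ n, ∀ᵐ ω ∂μ, ‖x (n + 1) ω - x n ω‖ ≤ C * γ n)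
    (τ : ℕ → Ω → ℕ) (hτ_meas : ∀ n, Measurable (τ n))
    (B : ℝ≥0∞) (hB : B < ⊤)
    (hmom : ∀ n, 1 ≤ n → ∫⁻ ω, ((τ n ω : ℝ≥0∞)) ^ 2 ∂μ ≤ B) :
    ∀ᵐ ω ∂μ, Tendsto (fun n => ‖x n ω - x (n - τ n ω) ω‖) atTop (nhds 0) := by
  obtain ⟨α, hα_gt, hα_lt⟩ := exists_between (lt_min hη₁ one_half_lt_one)
  have hdelay := ae_eventually_le_rpow_of_lintegral_sq_le (fun n => (hτ_meas n).aemeasurable)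
    hB.ne hα_gt hmom
  have hγ_small := isLittleO_rpow_neg_of_tendsto_rpow_mul hγo
  filter_upwards [hdelay, ae_all_iff.2 hx] with ω hτω hxω
  have hstep : (fun n => x (n + 1) ω - x n ω) =o[atTop] fun n : ℕ => (n : ℝ) ^ (-η) :=
    (IsBigO.of_bound |C| (Eventually.of_forall fun n =>
      (hxω n).trans ((le_abs_self _).trans (abs_mul C (γ n)).le))).trans_isLittleO hγ_small
  exact tendsto_norm_sub_delayed_of_isLittleO (by linarith) (hα_lt.trans_le (min_le_left _ _)).le
    (hα_lt.trans_le (min_le_right _ _)) hstep hτω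

/-- Proposition 1 of the paper: for iterates whose increments are bounded by a
constant times the step-size (with `γ n = o(n ^ (-η))`), the errors due to
communication delays with uniformly bounded second moments vanish
asymptotically, almost surely. -/
theorem dspg_delay_error_vanishes
    {Ω : Type*} [MeasurableSpace Ω] (μ : Measure Ω) [IsProbabilityMeasure μ]
    (d : ℕ) (hd : 1 ≤ d) (η : ℝ) (hη₁ : 1 / 2 < η) (hη₂ : η ≤ 1)
    (C : ℝ) (hC : 0 ≤ C)
    (γ : ℕ → ℝ) (hγ : ∀ n, 0 ≤ γ n)
    (hγo : Tendsto (fun n : ℕ => (n : ℝ) ^ η * γ n) atTop (nhds 0))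
    (x : ℕ → Ω → EuclideanSpace ℝ (Fin d))
    (hx : ∀ n, ∀ᵐ ω ∂μ, ‖x (n + 1) ω - x n ω‖ ≤ C * γ n)
    (τ : ℕ → Ω → ℕ) (hτ_meas : ∀ n, Measurable (τ n))
    (hτ_le : ∀ n ω, τ n ω ≤ n)
    (B : ℝ≥0∞) (hB : B < ⊤)
    (hmom : ∀ n, 1 ≤ n → ∫⁻ ω, ((τ n ω : ℝ≥0∞)) ^ 2 ∂μ ≤ B) :
    ∀ᵐ ω ∂μ, Tendsto (fun n => ‖x n ω - x (n - τ n ω) ω‖) atTop (nhds 0) :=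
  dspg_delay_error_vanishes_general μ d η hη₁ C γ hγo x hx τ hτ_meas B hB hmom
end

section
/- Let A be a symmetric d × d real matrix, let F(x) = xᵀ A x, let c > 0, let 1 ≤ i ≤ d, and let Δ(1), …, Δ(d) be independent random variables each taking values +1 and −1 with probability 1/2. Then for every x ∈ ℝ^d, the variance of the SPSA gradient estimator satisfies Var[(F(x + cΔ) − F(x − cΔ))/(2c Δ(i))] = 4 Σ_{j ≠ i} ((A x)(j))². -/
open MeasureTheory ProbabilityTheory Matrix

/-!
By polarization, `F(x + cΔ) - F(x - cΔ) = 4c ⟨Δ, Ax⟩`, and since `Δ(i)⁻¹ = Δ(i)` the estimator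
is `2 Δ(i) ⟨Ax, Δ⟩`. Being independent, centred and of square one, the coordinates of `Δ` are
orthonormal in `L²`, so the estimator has mean `2 (Ax)(i)` and, as `Δ(i)² = 1`, second moment
`4 ‖Ax‖²`; the variance is the difference.
-/

theorem dotProduct_mulVec_add_sub_dotProduct_mulVec_sub {n R : Type*} [Fintype n] [CommRing R]
    {A : Matrix n n R} (hA : A.IsSymm) (x v : n → R) :
    (x + v) ⬝ᵥ A *ᵥ (x + v) - (x - v) ⬝ᵥ A *ᵥ (x - v) = 4 * (v ⬝ᵥ A *ᵥ x) := by
  have hsymm : x ⬝ᵥ A *ᵥ v = v ⬝ᵥ A *ᵥ x := by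
    rw [dotProduct_mulVec, ← mulVec_transpose, hA, dotProduct_comm]
  simp only [mulVec_add, mulVec_sub, add_dotProduct, sub_dotProduct, dotProduct_add,
    dotProduct_sub, hsymm]
  ring

noncomputable def spsaEstimate {n : Type*} (F : (n → ℝ) → ℝ) (c : ℝ) (x δ : n → ℝ) (i : n) : ℝ :=
  (F (x + c • δ) - F (x - c • δ)) / (2 * c * δ i)

theorem spsaEstimate_quadraticForm {n : Type*} [Fintype n] {A : Matrix n n ℝ} (hA : A.IsSymm)
    {c : ℝ} (hc : c ≠ 0) (x δ : n → ℝ) {i : n} (hδi : δ i ^ 2 = 1) :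
    spsaEstimate (fun y => y ⬝ᵥ A *ᵥ y) c x δ i = 2 * (δ i * (A *ᵥ x ⬝ᵥ δ)) := by
  have hδi0 : δ i ≠ 0 := by rintro h; simp [h] at hδi
  rw [spsaEstimate, dotProduct_mulVec_add_sub_dotProduct_mulVec_sub hA, smul_dotProduct,
    smul_eq_mul, dotProduct_comm, div_eq_iff (by positivity)]
  linear_combination (-4 * c * (A *ᵥ x ⬝ᵥ δ)) * hδi

section

variable {Ω ι : Type*} [MeasurableSpace Ω] {μ : Measure Ω} [Fintype ι] {Δ : ι → Ω → ℝ}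

theorem memLp_dotProduct {p : ENNReal} (hΔ : ∀ j, MemLp (Δ j) p μ) (a : ι → ℝ) :
    MemLp (fun ω => a ⬝ᵥ fun j => Δ j ω) p μ :=
  memLp_finsetSum _ fun j _ => (hΔ j).const_mul (a j)

theorem integral_dotProduct_mul_dotProduct (hΔ : ∀ j, MemLp (Δ j) 2 μ)
    (hnorm : ∀ j, ∫ ω, Δ j ω ^ 2 ∂μ = 1)
    (horth : Pairwise fun j k => ∫ ω, Δ j ω * Δ k ω ∂μ = 0) (a b : ι → ℝ) :
    ∫ ω, (a ⬝ᵥ fun j => Δ j ω) * (b ⬝ᵥ fun j => Δ j ω) ∂μ = a ⬝ᵥ b := by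
  classical
  have hint : ∀ j k, Integrable (fun ω => a j * b k * (Δ j ω * Δ k ω)) μ := fun j k =>
    ((hΔ j).integrable_mul (hΔ k)).const_mul _
  have hentry : ∀ j k, ∫ ω, a j * b k * (Δ j ω * Δ k ω) ∂μ = if j = k then a j * b j else 0 := by
    intro j k
    rw [integral_const_mul]
    split_ifs with hjk
    · subst hjk; simp_rw [← sq, hnorm, mul_one]
    · rw [horth hjk, mul_zero]
  simp_rw [dotProduct, Finset.sum_mul_sum, mul_mul_mul_comm (a _) (Δ _ _)]
  rw [integral_finsetSum _ fun j _ => integrable_finsetSum _ fun k _ => hint j k]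
  simp_rw [integral_finsetSum _ fun k _ => hint _ k, hentry, Finset.sum_ite_eq, Finset.mem_univ,
    if_true]

variable [IsProbabilityMeasure μ]

theorem integral_eq_zero_of_eq_one_or_neg_one {X : Ω → ℝ} (hX : Measurable X)
    (hval : ∀ ω, X ω = 1 ∨ X ω = -1) (hhalf : μ {ω | X ω = 1} = 1 / 2) : ∫ ω, X ω ∂μ = 0 := by
  set s := {ω | X ω = 1}
  have hs : MeasurableSet s := hX (measurableSet_singleton 1)
  have hint : Integrable X μ := .of_bound hX.aestronglyMeasurable 1 <| ae_of_all _ fun ω => by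
    rcases hval ω with h | h <;> simp [h]
  have hpos : Set.EqOn X 1 s := fun ω hω => hω
  have hneg : Set.EqOn X (-1) sᶜ := fun ω hω => (hval ω).resolve_left hω
  rw [← integral_add_compl hs hint, setIntegral_congr_fun hs hpos,
    setIntegral_congr_fun hs.compl hneg]
  simp only [Pi.one_apply, Pi.neg_apply, setIntegral_const, smul_eq_mul]
  rw [probReal_compl_eq_one_sub hs, measureReal_def, hhalf]
  norm_num

theorem variance_mul_dotProduct_of_sq_eq_one [DecidableEq ι]
    (hmeas : ∀ j, AEStronglyMeasurable (Δ j) μ) (hsq : ∀ j ω, Δ j ω ^ 2 = 1)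
    (horth : Pairwise fun j k => ∫ ω, Δ j ω * Δ k ω ∂μ = 0) (a : ι → ℝ) (i : ι) :
    variance (fun ω => Δ i ω * (a ⬝ᵥ fun j => Δ j ω)) μ = ∑ j ∈ Finset.univ.erase i, a j ^ 2 := by
  have hLinf : ∀ j, MemLp (Δ j) ⊤ μ := fun j =>
    memLp_top_of_bound (hmeas j) 1 <| ae_of_all _ fun ω => by
      rw [Real.norm_eq_abs, ← sq_le_one_iff_abs_le_one, hsq]
  have hL2 : ∀ j, MemLp (Δ j) 2 μ := fun j => (hLinf j).mono_exponent le_top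
  have hmoment := integral_dotProduct_mul_dotProduct hL2 (by simp [hsq]) horth
  have hΔi : Δ i = fun ω => Pi.single i 1 ⬝ᵥ fun j => Δ j ω := by
    simp [single_dotProduct]
  have hfirst : ∫ ω, Δ i ω * (a ⬝ᵥ fun j => Δ j ω) ∂μ = a i := by
    rw [hΔi, hmoment, single_dotProduct, one_mul]
  have hsecond : ∫ ω, (Δ i ω * (a ⬝ᵥ fun j => Δ j ω)) ^ 2 ∂μ = a ⬝ᵥ a := by
    simp_rw [mul_pow, hsq, one_mul, sq, hmoment]
  have hmemLp : MemLp (fun ω => Δ i ω * (a ⬝ᵥ fun j => Δ j ω)) 2 μ :=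
    (memLp_dotProduct hL2 a).mul (hLinf i)
  rw [variance_eq_sub hmemLp]
  simp only [Pi.pow_apply]
  rw [hsecond, hfirst, dotProduct, ← Finset.add_sum_erase _ _ (Finset.mem_univ i)]
  simp only [← sq, add_sub_cancel_left]

end

/-- For the quadratic objective `F(x) = xᵀ A x` with `A` symmetric, the
variance of the SPSA gradient estimator with independent symmetric Bernoulli
perturbations equals `4 Σ_{j ≠ i} ((A x)(j))²`. -/
theorem spsa_estimator_variance_quadratic
    {Ω : Type*} [MeasurableSpace Ω] (μ : Measure Ω) [IsProbabilityMeasure μ]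
    {d : ℕ} (A : Matrix (Fin d) (Fin d) ℝ) (hA : A.IsSymm)
    (F : (Fin d → ℝ) → ℝ) (hFdef : ∀ x, F x = x ⬝ᵥ A.mulVec x)
    (c : ℝ) (hc : 0 < c) (i : Fin d)
    (Δ : Fin d → Ω → ℝ) (hmeas : ∀ j, Measurable (Δ j))
    (hindep : iIndepFun Δ μ)
    (hval : ∀ j ω, Δ j ω = 1 ∨ Δ j ω = -1)
    (hsym : ∀ j, μ {ω | Δ j ω = 1} = 1 / 2)
    (x : Fin d → ℝ) :
    variance (fun ω =>
        (F (x + c • fun j => Δ j ω) - F (x - c • fun j => Δ j ω)) /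
          (2 * c * Δ i ω)) μ
      = 4 * ∑ j ∈ Finset.univ.erase i, (A.mulVec x j) ^ 2 := by
  obtain rfl : F = fun y => y ⬝ᵥ A *ᵥ y := funext hFdef
  have hsq : ∀ j ω, Δ j ω ^ 2 = 1 := fun j ω => by rcases hval j ω with h | h <;> simp [h]
  have horth : Pairwise fun j k => ∫ ω, Δ j ω * Δ k ω ∂μ = 0 := fun j k hjk => by
    have hmean := integral_eq_zero_of_eq_one_or_neg_one (hmeas j) (hval j) (hsym j)
    simpa [hmean] using (hindep.indepFun hjk).integral_mul_eq_mul_integral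
      (hmeas j).aestronglyMeasurable (hmeas k).aestronglyMeasurable
  have hestimate : ∀ ω, spsaEstimate (fun y => y ⬝ᵥ A *ᵥ y) c x (fun j => Δ j ω) i =
      2 * (Δ i ω * (A *ᵥ x ⬝ᵥ fun j => Δ j ω)) := fun ω =>
    spsaEstimate_quadraticForm hA hc.ne' x _ (hsq i ω)
  change variance (fun ω => spsaEstimate (fun y => y ⬝ᵥ A *ᵥ y) c x (fun j => Δ j ω) i) μ = _
  simp_rw [hestimate, variance_const_mul, variance_mul_dotProduct_of_sq_eq_one
    (fun j => (hmeas j).aestronglyMeasurable) hsq horth]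
  norm_num
end

section
/- Let F : ℝ^d → ℝ be three times continuously differentiable with ‖D³F(y)‖ ≤ M for all y ∈ ℝ^d (operator norm of the third derivative as a trilinear map). Let c > 0, let 1 ≤ i ≤ d, and let Δ(1), …, Δ(d) be independent random variables each taking values +1 and −1 with probability 1/2. Then for every x ∈ ℝ^d, |E[(F(x + cΔ) − F(x − cΔ))/(2c Δ(i))] − ∂F(x)/∂x(i)| ≤ (M d^{3/2} / 6) c². In particular, the bias of the SPSA gradient estimator with constant sensitivity parameter c is O(c²). -/
open MeasureTheory ProbabilityTheory

/-!
Third-order Taylor expansion along the segment through `x` in direction `u`: the defect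
`ψ t = F (x + t u) - F (x - t u) - 2 t DF(x) u` and its derivative vanish at `0`, and
`‖ψ'' t‖ ≤ 2 M ‖u‖³ t` because `D²F` is `M`-Lipschitz, so `‖ψ 1‖ ≤ M ‖u‖³ / 3`.
For `u = cΔ` we have `‖u‖ = c √d` and `1 / Δ i = Δ i`, so the estimator equals
`DF(x) Δ · Δ i = ∑ j, ∂ⱼF(x) Δ j Δ i` up to an error of at most `M d^{3/2} c² / 6`,
and `E[Δ j Δ i]` is `1` for `j = i` and `0` otherwise by independence and symmetry.
-/

lemma norm_le_mul_pow_succ_div_of_hasDerivAt {V : Type*} [NormedAddCommGroup V] [NormedSpace ℝ V]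
    {φ φ' : ℝ → V} (hφ : ∀ t, HasDerivAt φ (φ' t) t)
    (h0 : φ 0 = 0) {A : ℝ} {n : ℕ} (hφ' : ∀ t, 0 ≤ t → ‖φ' t‖ ≤ A * t ^ n) {t : ℝ} (ht : 0 ≤ t) :
    ‖φ t‖ ≤ A * t ^ (n + 1) / (n + 1) := by
  have hB : ∀ s, HasDerivAt (fun s : ℝ => A * s ^ (n + 1) / (n + 1)) (A * s ^ n) s := fun s => by
    refine (((hasDerivAt_pow (n + 1) s).const_mul A).div_const ((n : ℝ) + 1)).congr_deriv ?_
    push_cast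
    field_simp
  exact image_norm_le_of_norm_deriv_right_le_deriv_boundary
    (fun s _ => (hφ s).continuousAt.continuousWithinAt) (fun s _ => (hφ s).hasDerivWithinAt)
    (by simp [h0]) hB (fun s hs => hφ' s hs.1) ⟨ht, le_rfl⟩

section
variable {E V : Type*} [NormedAddCommGroup E] [NormedSpace ℝ E] [NormedAddCommGroup V]
  [NormedSpace ℝ V]

lemma norm_iteratedFDeriv_sub_le {F : E → V} {n : ℕ} (hF : ContDiff ℝ (n + 1) F)
    {M : ℝ} (hM : ∀ y, ‖iteratedFDeriv ℝ (n + 1) F y‖ ≤ M) (y z : E) :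
    ‖iteratedFDeriv ℝ n F y - iteratedFDeriv ℝ n F z‖ ≤ M * ‖y - z‖ :=
  convex_univ.norm_image_sub_le_of_norm_fderiv_le
    (fun w _ => hF.differentiable_iteratedFDeriv (by norm_cast; omega) w)
    (fun w _ => (norm_fderiv_iteratedFDeriv).trans_le (hM w)) trivial trivial

lemma hasDerivAt_comp_add_smul {G : E → V} (hG : Differentiable ℝ G) (x u : E) (t : ℝ) :
    HasDerivAt (fun s : ℝ => G (x + s • u)) (fderiv ℝ G (x + t • u) u) t := by
  have : HasDerivAt (fun s : ℝ => x + s • u) u t := by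
    simpa using ((hasDerivAt_id t).smul_const u).const_add x
  exact (hG _).hasFDerivAt.comp_hasDerivAt t this

lemma norm_sub_sub_two_smul_fderiv_le {F : E → V} (hF : ContDiff ℝ 3 F) {M : ℝ}
    (hM : ∀ y, ‖iteratedFDeriv ℝ 3 F y‖ ≤ M) (x u : E) :
    ‖F (x + u) - F (x - u) - (2 : ℝ) • fderiv ℝ F x u‖ ≤ M * ‖u‖ ^ 3 / 3 := by
  have hFd : Differentiable ℝ F := hF.differentiable (by norm_num)
  have hD : Differentiable ℝ (fderiv ℝ F) :=
    (hF.fderiv_right (m := 2) (by norm_num)).differentiable (by norm_num)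
  set ψ : ℝ → V := fun t => F (x + t • u) - F (x + t • -u) - (2 * t) • fderiv ℝ F x u
  set α : ℝ → V := fun t =>
    fderiv ℝ F (x + t • u) u + fderiv ℝ F (x + t • -u) u - (2 : ℝ) • fderiv ℝ F x u
  set α' : ℝ → V := fun t =>
    iteratedFDeriv ℝ 2 F (x + t • u) ![u, u] - iteratedFDeriv ℝ 2 F (x + t • -u) ![u, u]
  have hψ : ∀ t, HasDerivAt ψ (α t) t := fun t => by
    have h2 : HasDerivAt (fun t : ℝ => (2 * t) • fderiv ℝ F x u) ((2 : ℝ) • fderiv ℝ F x u) t := by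
      simpa using ((hasDerivAt_id t).const_mul (2 : ℝ)).smul_const (fderiv ℝ F x u)
    refine (((hasDerivAt_comp_add_smul hFd x u t).sub
      (hasDerivAt_comp_add_smul hFd x (-u) t)).sub h2).congr_deriv ?_
    simp [α, sub_eq_add_neg]
  have hα : ∀ t, HasDerivAt α (α' t) t := fun t => by
    have hDu : ∀ w, HasDerivAt (fun s : ℝ => fderiv ℝ F (x + s • w) u)
        (fderiv ℝ (fderiv ℝ F) (x + t • w) w u) t := fun w => by
      simpa using (hasDerivAt_comp_add_smul hD x w t).clm_apply (hasDerivAt_const t u)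
    refine (((hDu u).add (hDu (-u))).sub_const _).congr_deriv ?_
    simp [α', iteratedFDeriv_two_apply, sub_eq_add_neg]
  have hα' : ∀ t, 0 ≤ t → ‖α' t‖ ≤ (2 * M * ‖u‖ ^ 3) * t ^ 1 := fun t ht => calc
    ‖α' t‖ ≤ ‖iteratedFDeriv ℝ 2 F (x + t • u) - iteratedFDeriv ℝ 2 F (x + t • -u)‖
        * ∏ i, ‖(![u, u] : Fin 2 → E) i‖ := by
      simpa only [α', sub_apply] using
        (iteratedFDeriv ℝ 2 F (x + t • u) - iteratedFDeriv ℝ 2 F (x + t • -u)).le_opNorm ![u, u]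
    _ ≤ M * ‖(x + t • u) - (x + t • -u)‖ * (‖u‖ * ‖u‖) := by
      rw [Fin.prod_univ_two]
      exact mul_le_mul_of_nonneg_right (norm_iteratedFDeriv_sub_le hF hM _ _) (by positivity)
    _ = (2 * M * ‖u‖ ^ 3) * t ^ 1 := by
      rw [show x + t • u - (x + t • -u) = (2 * t) • u by module, norm_smul,
        Real.norm_of_nonneg (by positivity)]
      ring
  have hα0 : α 0 = 0 := by simp [α]; module
  have hαt : ∀ t, 0 ≤ t → ‖α t‖ ≤ (M * ‖u‖ ^ 3) * t ^ 2 := fun t ht =>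
    (norm_le_mul_pow_succ_div_of_hasDerivAt hα hα0 hα' ht).trans_eq (by push_cast; ring)
  have hψ1 := norm_le_mul_pow_succ_div_of_hasDerivAt hψ (by simp [ψ]) hαt zero_le_one
  norm_num [ψ, sub_eq_add_neg] at hψ1 ⊢
  exact hψ1
end

section
variable {Ω : Type*} [MeasurableSpace Ω] {μ : Measure Ω} [IsProbabilityMeasure μ]

lemma abs_integral_sub_integral_le {f g : Ω → ℝ} (hf : AEStronglyMeasurable f μ)
    (hg : Integrable g μ) {B : ℝ} (hB : ∀ ω, |f ω - g ω| ≤ B) :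
    |∫ ω, f ω ∂μ - ∫ ω, g ω ∂μ| ≤ B := by
  have hB' : ∀ᵐ ω ∂μ, ‖(f - g) ω‖ ≤ B :=
    ae_of_all _ fun ω => (Real.norm_eq_abs _).trans_le (hB ω)
  have hfg : Integrable (f - g) μ := .of_bound (hf.sub hg.1) B hB'
  rw [← integral_sub (by simpa using hfg.add hg) hg]
  simpa using norm_integral_le_of_norm_le_const hB'

lemma integral_eq_zero_of_forall_eq_one_or_eq_neg_one {X : Ω → ℝ} (hX : Measurable X)
    (hval : ∀ ω, X ω = 1 ∨ X ω = -1) (hsym : μ {ω | X ω = 1} = 1 / 2) : ∫ ω, X ω ∂μ = 0 := by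
  have hA : MeasurableSet {ω | X ω = 1} := measurableSet_eq_fun hX measurable_const
  have hX_eq : X = fun ω => {ω | X ω = 1}.indicator (fun _ => (2 : ℝ)) ω - 1 := by
    ext ω
    rcases hval ω with h | h <;> norm_num [Set.indicator, h]
  rw [hX_eq, integral_sub ((integrable_const 2).indicator hA) (integrable_const 1),
    integral_indicator_const _ hA, measureReal_def, hsym]
  simp

variable {ι : Type*} {Δ : ι → Ω → ℝ}

lemma integrable_mul_of_forall_eq_one_or_eq_neg_one (hmeas : ∀ j, Measurable (Δ j))
    (hval : ∀ j ω, Δ j ω = 1 ∨ Δ j ω = -1) (i j : ι) :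
    Integrable (fun ω => Δ j ω * Δ i ω) μ :=
  .of_bound ((hmeas j).mul (hmeas i)).aestronglyMeasurable 1 <| ae_of_all _ fun ω => by
    rcases hval j ω with h | h <;> rcases hval i ω with h' | h' <;> simp [h, h']

lemma integral_mul_eq_ite [DecidableEq ι] (hmeas : ∀ j, Measurable (Δ j))
    (hindep : iIndepFun Δ μ) (hval : ∀ j ω, Δ j ω = 1 ∨ Δ j ω = -1)
    (hsym : ∀ j, μ {ω | Δ j ω = 1} = 1 / 2) (i j : ι) :
    ∫ ω, Δ j ω * Δ i ω ∂μ = if j = i then 1 else 0 := by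
  split_ifs with hji
  · subst hji
    have hsq : ∀ ω, Δ j ω * Δ j ω = 1 := fun ω => by rcases hval j ω with h | h <;> simp [h]
    simp [hsq]
  · rw [← Pi.mul_def, (hindep.indepFun hji).integral_mul_eq_mul_integral
      (hmeas j).aestronglyMeasurable (hmeas i).aestronglyMeasurable,
      integral_eq_zero_of_forall_eq_one_or_eq_neg_one (hmeas j) (hval j) (hsym j), zero_mul]

section
variable [Fintype ι] (a : ι → ℝ) (i : ι)

lemma integrable_sum_mul_mul (hmeas : ∀ j, Measurable (Δ j))
    (hval : ∀ j ω, Δ j ω = 1 ∨ Δ j ω = -1) :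
    Integrable (fun ω => (∑ j, a j * Δ j ω) * Δ i ω) μ := by
  simp_rw [Finset.sum_mul, mul_assoc]
  exact integrable_finsetSum _ fun j _ =>
    (integrable_mul_of_forall_eq_one_or_eq_neg_one hmeas hval i j).const_mul (a j)

lemma integral_sum_mul_mul (hmeas : ∀ j, Measurable (Δ j)) (hindep : iIndepFun Δ μ)
    (hval : ∀ j ω, Δ j ω = 1 ∨ Δ j ω = -1) (hsym : ∀ j, μ {ω | Δ j ω = 1} = 1 / 2) :
    ∫ ω, (∑ j, a j * Δ j ω) * Δ i ω ∂μ = a i := by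
  classical
  simp_rw [Finset.sum_mul, mul_assoc]
  rw [integral_finsetSum _ fun j _ =>
    (integrable_mul_of_forall_eq_one_or_eq_neg_one hmeas hval i j).const_mul (a j)]
  simp [integral_const_mul, integral_mul_eq_ite hmeas hindep hval hsym]
end
end

lemma EuclideanSpace.apply_eq_sum_mul_single {ι : Type*} [Fintype ι] [DecidableEq ι]
    (L : EuclideanSpace ℝ ι →L[ℝ] ℝ) (x : EuclideanSpace ℝ ι) :
    L x = ∑ j, L (EuclideanSpace.single j 1) * x j := by
  conv_lhs => rw [← (EuclideanSpace.basisFun ι ℝ).sum_repr x]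
  simp [mul_comm]

lemma EuclideanSpace.norm_eq_sqrt_card {ι : Type*} [Fintype ι] (x : EuclideanSpace ℝ ι)
    (hx : ∀ j, |x j| = 1) : ‖x‖ = √(Fintype.card ι) := by
  simp [EuclideanSpace.norm_eq, hx]

lemma abs_sub_div_sub_fderiv_mul_le {E : Type*} [NormedAddCommGroup E] [NormedSpace ℝ E]
    {F : E → ℝ} (hF : ContDiff ℝ 3 F) {M : ℝ} (hM : ∀ y, ‖iteratedFDeriv ℝ 3 F y‖ ≤ M)
    (x v : E) {c : ℝ} (hc : 0 < c) {s : ℝ} (hs : s = 1 ∨ s = -1) :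
    |(F (x + c • v) - F (x - c • v)) / (2 * c * s) - fderiv ℝ F x v * s| ≤
      M * ‖v‖ ^ 3 / 6 * c ^ 2 := by
  have hTaylor := norm_sub_sub_two_smul_fderiv_le hF hM x (c • v)
  rw [Real.norm_eq_abs, map_smul, smul_eq_mul, smul_eq_mul, norm_smul,
    Real.norm_of_nonneg hc.le] at hTaylor
  have hdiff : (F (x + c • v) - F (x - c • v)) / (2 * c * s) - fderiv ℝ F x v * s =
      (F (x + c • v) - F (x - c • v) - 2 * (c * fderiv ℝ F x v)) * s / (2 * c) := by
    rcases hs with rfl | rfl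
    · field_simp
    · field_simp; ring
  have hs_abs : |s| = 1 := by rcases hs with rfl | rfl <;> simp
  rw [hdiff, abs_div, abs_mul, hs_abs, mul_one, abs_of_pos (by positivity : (0 : ℝ) < 2 * c),
    div_le_iff₀ (by positivity)]
  calc _ ≤ M * (c * ‖v‖) ^ 3 / 3 := hTaylor
    _ = M * ‖v‖ ^ 3 / 6 * c ^ 2 * (2 * c) := by ring

/-- Bias bound for the SPSA gradient estimator with constant sensitivity
parameter `c`: if `F` is `C³` with third derivative bounded by `M`, then the
bias along coordinate `i` is at most `(M d^{3/2} / 6) c²`. -/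
theorem spsa_estimator_bias_bound
    {Ω : Type*} [MeasurableSpace Ω] (μ : Measure Ω) [IsProbabilityMeasure μ]
    {d : ℕ} (F : EuclideanSpace ℝ (Fin d) → ℝ) (hF : ContDiff ℝ 3 F)
    (M : ℝ) (hM : ∀ y, ‖iteratedFDeriv ℝ 3 F y‖ ≤ M)
    (c : ℝ) (hc : 0 < c) (i : Fin d)
    (Δ : Fin d → Ω → ℝ) (hmeas : ∀ j, Measurable (Δ j))
    (hindep : iIndepFun Δ μ)
    (hval : ∀ j ω, Δ j ω = 1 ∨ Δ j ω = -1)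
    (hsym : ∀ j, μ {ω | Δ j ω = 1} = 1 / 2)
    (x : EuclideanSpace ℝ (Fin d)) :
    |(∫ ω, (F (x + c • (WithLp.equiv 2 (Fin d → ℝ)).symm fun j => Δ j ω) -
          F (x - c • (WithLp.equiv 2 (Fin d → ℝ)).symm fun j => Δ j ω)) /
            (2 * c * Δ i ω) ∂μ) -
        fderiv ℝ F x (EuclideanSpace.single i 1)|
      ≤ M * (d : ℝ) ^ ((3 : ℝ) / 2) / 6 * c ^ 2 := by
  set v : Ω → EuclideanSpace ℝ (Fin d) := fun ω =>
    (WithLp.equiv 2 (Fin d → ℝ)).symm fun j => Δ j ω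
  set a : Fin d → ℝ := fun j => fderiv ℝ F x (EuclideanSpace.single j 1)
  have hv_norm : ∀ ω, ‖v ω‖ ^ 3 = (d : ℝ) ^ ((3 : ℝ) / 2) := fun ω => by
    rw [EuclideanSpace.norm_eq_sqrt_card _ fun j => by rcases hval j ω with h | h <;> simp [v, h],
      Fintype.card_fin, Real.rpow_div_two_eq_sqrt _ d.cast_nonneg]
    norm_cast
  have hlin : ∀ ω, fderiv ℝ F x (v ω) = ∑ j, a j * Δ j ω := fun ω =>
    EuclideanSpace.apply_eq_sum_mul_single _ _
  have hv_meas : Measurable v := (WithLp.measurable_toLp 2 _).comp (measurable_pi_lambda _ hmeas)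
  have hest_meas : Measurable fun ω => (F (x + c • v ω) - F (x - c • v ω)) / (2 * c * Δ i ω) := by
    have := hF.continuous
    fun_prop
  have hmean : ∫ ω, (∑ j, a j * Δ j ω) * Δ i ω ∂μ = fderiv ℝ F x (EuclideanSpace.single i 1) :=
    integral_sum_mul_mul a i hmeas hindep hval hsym
  rw [← hmean]
  refine abs_integral_sub_integral_le hest_meas.aestronglyMeasurable
    (integrable_sum_mul_mul a i hmeas hval) fun ω => ?_
  simpa [← hlin, hv_norm] using abs_sub_div_sub_fderiv_mul_le hF hM x (v ω) hc (hval i ω)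
end
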